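/- arXiv:1907.03669 — 2 statements merged into one kernel-verified Lean document; each statement's English description precedes it below -/
import Mathlib

section
/- Let 0 < R and G(x) = R·g(x/R) where g(x) = (√(1-x²) - x·arccos(x))/π. Then there exist positive constants c₁, c₂ such that c₁·(R-x)^{3/2} ≤ G(x) ≤ c₂·(R-x)^{3/2} for all x in [0,R]. -/
open Real Set

noncomputable def g (x : ℝ) : ℝ := (Real.sqrt (1 - x^2) - x * Real.arccos x) / Real.pi

noncomputable def G (R x : ℝ) : ℝ := R * g (x / R)

lemma mono_aux {f f' : ℝ → ℝ} {b : ℝ}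
    (hf : ∀ t, HasDerivAt f (f' t) t) (h0 : ∀ t ∈ Set.Icc (0:ℝ) b, 0 ≤ f' t) :
    ∀ t ∈ Set.Icc (0:ℝ) b, f 0 ≤ f t := by
  intro t ht
  have hmono : MonotoneOn f (Set.Icc (0:ℝ) b) := by
    apply monotoneOn_of_deriv_nonneg (convex_Icc 0 b)
      (fun x _ => (hf x).continuousAt.continuousWithinAt)
      (fun x hx => ((hf x).differentiableAt).differentiableWithinAt)
    intro x hx
    rw [(hf x).deriv]
    exact h0 x (interior_subset hx)
  exact hmono ⟨le_refl 0, ht.1.trans ht.2⟩ ht (ht.1)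

lemma key_lower {t : ℝ} (ht : t ∈ Set.Icc (0:ℝ) (π/2)) :
    2/(3*π) * t^3 ≤ Real.sin t - t * Real.cos t := by
  have hπ := Real.pi_pos
  have := mono_aux (f := fun t => Real.sin t - t * Real.cos t - 2/(3*π) * t^3)
    (f' := fun t => t * Real.sin t - 2/π * t^2) ?_ ?_ t ht
  · simpa using this
  · intro s
    have h1 : HasDerivAt (fun s : ℝ => Real.sin s - s * Real.cos s - 2/(3*π) * s^3)
        (Real.cos s - (1 * Real.cos s + s * (-Real.sin s)) - 2/(3*π) * (3 * s^2)) s := by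
      exact ((Real.hasDerivAt_sin s).sub ((hasDerivAt_id s).mul (Real.hasDerivAt_cos s))).sub
        (((hasDerivAt_pow 3 s)).const_mul (2/(3*π)))
    convert h1 using 1
    field_simp
    ring
  · intro s hs
    have hsin : 2/π * s ≤ Real.sin s := Real.mul_le_sin hs.1 hs.2
    have : 2/π * s^2 ≤ s * Real.sin s := by
      have := mul_le_mul_of_nonneg_left hsin hs.1
      nlinarith
    linarith

lemma key_upper {t : ℝ} (ht : t ∈ Set.Icc (0:ℝ) (π/2)) :
    Real.sin t - t * Real.cos t ≤ 1/3 * t^3 := by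
  have := mono_aux (f := fun t => 1/3 * t^3 - (Real.sin t - t * Real.cos t))
    (f' := fun t => t^2 - t * Real.sin t) ?_ ?_ t ht
  · simpa using this
  · intro s
    have h1 : HasDerivAt (fun s : ℝ => 1/3 * s^3 - (Real.sin s - s * Real.cos s))
        ((1/3) * (3*s^2) - (Real.cos s - (1 * Real.cos s + s * (-Real.sin s)))) s := by
      exact ((hasDerivAt_pow 3 s).const_mul (1/3:ℝ)).sub
        ((Real.hasDerivAt_sin s).sub ((hasDerivAt_id s).mul (Real.hasDerivAt_cos s)))
    convert h1 using 1
    ring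
  · intro s hs
    have hsin : Real.sin s ≤ s := Real.sin_le hs.1
    nlinarith [mul_nonneg hs.1 (sub_nonneg.2 hsin)]

lemma rpow_sq_mul {x c : ℝ} (hx : 0 ≤ x) (hc : 0 ≤ c) :
    ((c * x^2) ^ ((3:ℝ)/2)) = c ^ ((3:ℝ)/2) * x^3 := by
  rw [Real.mul_rpow hc (sq_nonneg x)]
  congr 1
  rw [← Real.rpow_natCast x 2, ← Real.rpow_mul hx, ← Real.rpow_natCast x 3]
  norm_num

lemma g_bounds : ∃ a b : ℝ, 0 < a ∧ 0 < b ∧ ∀ u ∈ Set.Icc (0:ℝ) 1,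
    a * (1-u)^((3:ℝ)/2) ≤ g u ∧ g u ≤ b * (1-u)^((3:ℝ)/2) := by
  have hπ := Real.pi_pos
  refine ⟨2/(3*π^2) / ((1/2:ℝ)^((3:ℝ)/2)), 1/(3*π*((2/π^2)^((3:ℝ)/2))), by positivity,
    by positivity, ?_⟩
  intro u hu
  set t := Real.arccos u with htdef
  have ht0 : 0 ≤ t := Real.arccos_nonneg u
  have htπ2 : t ≤ π/2 := Real.arccos_le_pi_div_two.2 hu.1
  have hcos : Real.cos t = u := Real.cos_arccos (by linarith [hu.1]) hu.2
  have hsin : Real.sin t = Real.sqrt (1 - u^2) := Real.sin_arccos u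
  have hg : g u = (Real.sin t - t * Real.cos t) / π := by
    rw [g, hsin, hcos, ← htdef]; ring
  have ht : t ∈ Set.Icc (0:ℝ) (π/2) := ⟨ht0, htπ2⟩
  have hlow := key_lower ht
  have hup := key_upper ht
  have hu1 : 1 - u ≤ (1/2) * t^2 := by
    have := Real.one_sub_sq_div_two_le_cos (x := t)
    rw [hcos] at this; linarith
  have hu2 : (2/π^2) * t^2 ≤ 1 - u := by
    have habs : |t| ≤ π := by rw [abs_of_nonneg ht0]; linarith
    have := Real.cos_le_one_sub_mul_cos_sq habs
    rw [hcos] at this; linarith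
  have h1u : (0:ℝ) ≤ 1 - u := by linarith [hu.2]
  have hK : (0:ℝ) < (1/2:ℝ)^((3:ℝ)/2) := by positivity
  have hL : (0:ℝ) < (2/π^2:ℝ)^((3:ℝ)/2) := by positivity
  constructor
  · have hr : (1-u)^((3:ℝ)/2) ≤ (1/2:ℝ)^((3:ℝ)/2) * t^3 := by
      calc (1-u)^((3:ℝ)/2) ≤ ((1/2)*t^2)^((3:ℝ)/2) :=
            Real.rpow_le_rpow h1u hu1 (by norm_num)
        _ = (1/2:ℝ)^((3:ℝ)/2) * t^3 := rpow_sq_mul ht0 (by norm_num)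
    rw [hg]
    calc 2/(3*π^2) / ((1/2:ℝ)^((3:ℝ)/2)) * (1-u)^((3:ℝ)/2)
        ≤ 2/(3*π^2) / ((1/2:ℝ)^((3:ℝ)/2)) * ((1/2:ℝ)^((3:ℝ)/2) * t^3) := by
          apply mul_le_mul_of_nonneg_left hr (by positivity)
      _ = 2/(3*π) * t^3 / π := by field_simp
      _ ≤ (Real.sin t - t * Real.cos t) / π := (div_le_div_iff_of_pos_right hπ).2 hlow
  · have hr : (2/π^2:ℝ)^((3:ℝ)/2) * t^3 ≤ (1-u)^((3:ℝ)/2) := by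
      calc (2/π^2:ℝ)^((3:ℝ)/2) * t^3 = ((2/π^2)*t^2)^((3:ℝ)/2) :=
            (rpow_sq_mul ht0 (by positivity)).symm
        _ ≤ (1-u)^((3:ℝ)/2) := Real.rpow_le_rpow (by positivity) hu2 (by norm_num)
    rw [hg]
    calc (Real.sin t - t * Real.cos t) / π ≤ (1/3 * t^3) / π := (div_le_div_iff_of_pos_right hπ).2 hup
      _ = 1/(3*π*((2/π^2)^((3:ℝ)/2))) * ((2/π^2:ℝ)^((3:ℝ)/2) * t^3) := by field_simp
      _ ≤ 1/(3*π*((2/π^2)^((3:ℝ)/2))) * (1-u)^((3:ℝ)/2) := by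
          apply mul_le_mul_of_nonneg_left hr (by positivity)

theorem G_asymp_cusp (R : ℝ) (hR : 0 < R) :
    ∃ c₁ c₂ : ℝ, 0 < c₁ ∧ 0 < c₂ ∧ ∀ x ∈ Set.Icc (0:ℝ) R,
      c₁ * (R - x) ^ ((3:ℝ)/2) ≤ G R x ∧ G R x ≤ c₂ * (R - x) ^ ((3:ℝ)/2) := by
  obtain ⟨a, b, ha, hb, hab⟩ := g_bounds
  have hR32 : (0:ℝ) < R ^ ((3:ℝ)/2) := by positivity
  refine ⟨a * R / R ^ ((3:ℝ)/2), b * R / R ^ ((3:ℝ)/2), by positivity, by positivity, ?_⟩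
  intro x hx
  set u := x / R with hudef
  have hu : u ∈ Set.Icc (0:ℝ) 1 := ⟨div_nonneg hx.1 hR.le, (div_le_one hR).2 hx.2⟩
  have h1u : (0:ℝ) ≤ 1 - u := by linarith [hu.2]
  have hRx : R - x = R * (1 - u) := by rw [hudef]; field_simp
  have hpow : (R - x) ^ ((3:ℝ)/2) = R ^ ((3:ℝ)/2) * (1 - u) ^ ((3:ℝ)/2) := by
    rw [hRx, Real.mul_rpow hR.le h1u]
  obtain ⟨hg1, hg2⟩ := hab u hu
  have hGg : G R x = R * g u := rfl
  constructor
  · rw [hpow, hGg]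
    have : a * R / R ^ ((3:ℝ)/2) * (R ^ ((3:ℝ)/2) * (1 - u) ^ ((3:ℝ)/2))
        = R * (a * (1 - u) ^ ((3:ℝ)/2)) := by field_simp
    rw [this]
    exact mul_le_mul_of_nonneg_left hg1 hR.le
  · rw [hpow, hGg]
    have : b * R / R ^ ((3:ℝ)/2) * (R ^ ((3:ℝ)/2) * (1 - u) ^ ((3:ℝ)/2))
        = R * (b * (1 - u) ^ ((3:ℝ)/2)) := by field_simp
    rw [this]
    exact mul_le_mul_of_nonneg_left hg2 hR.le
end

section
/- Define ζ : (0,1] → [0,∞) implicitly by (2/3)ζ(z)^{3/2} = ln((1+√(1-z²))/z) - √(1-z²). Then as z → 1⁻, ζ(z)^{3/2} = √2·(1-z)^{3/2} + (9√2/20)·(1-z)^{5/2} + O((1-z)^{7/2}). -/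
/-!
Put `R z = (3/2)(ln((1 + √(1-z²))/z) - √(1-z²)) - √2 (1-z)^{3/2} - (9√2/20)(1-z)^{5/2}`, so that
`ζ(z)^{3/2}` minus the two-term expansion is `R z`, and `R 1 = 0`. With `t = √(1-z)` one finds
`R' z = -(3/2) t (√(1+z) - √2 z (7-3z)/4) / z`, and the bracket vanishes to second order at `z = 1`:
multiplied by `√(1+z) + √2 z (7-3z)/4 ≥ 1` it becomes the polynomial `(1-z)² (8+24z-9z²)/8`.
Hence `|R'| ≤ 9 (1-z)^{5/2}` on `[1/2, 1)`, and the mean value inequality on `[z, 1]` gives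
`|R z| ≤ 9 (1-z)^{7/2}`.
-/

open Filter Asymptotics Set Real

noncomputable def zetaRemainder (z : ℝ) : ℝ :=
  (3/2) * (log ((1 + √(1 - z^2)) / z) - √(1 - z^2))
    - √2 * (1 - z) ^ ((3:ℝ)/2) - (9 * √2 / 20) * (1 - z) ^ ((5:ℝ)/2)

noncomputable def zetaRemainderDeriv (x : ℝ) : ℝ :=
  -(3/2) * √(1 - x) * (√(1 + x) - √2 * x * (7 - 3 * x) / 4) / x

lemma rpow_natCast_div_two {a : ℝ} (ha : 0 ≤ a) (n : ℕ) : a ^ ((n:ℝ)/2) = √a ^ n := by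
  rw [sqrt_eq_rpow, ← rpow_natCast, ← rpow_mul ha, one_div_mul_eq_div]

lemma hasDerivAt_log_div_sub_sqrt {x : ℝ} (hx0 : 0 < x) (hx1 : x < 1) :
    HasDerivAt (fun y => log ((1 + √(1 - y^2)) / y) - √(1 - y^2)) (-√(1 - x^2) / x) x := by
  have h1x2 : 0 < 1 - x^2 := by nlinarith
  have hs : 0 < √(1 - x^2) := sqrt_pos.2 h1x2
  have hsq : √(1 - x^2) ^ 2 = 1 - x^2 := sq_sqrt h1x2.le
  have hsqrt := ((hasDerivAt_pow 2 x).const_sub 1).sqrt h1x2.ne'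
  have hlog : HasDerivAt (fun y => log ((1 + √(1 - y^2)) / y)) _ x :=
    ((hsqrt.const_add 1).fun_div (hasDerivAt_id' x) hx0.ne').log (by positivity)
  refine (hlog.sub hsqrt).congr_deriv ?_
  field_simp
  linear_combination (2 * √(1 - x^2)) * hsq

lemma hasDerivAt_zetaRemainder {x : ℝ} (hx0 : 0 < x) (hx1 : x < 1) :
    HasDerivAt zetaRemainder (zetaRemainderDeriv x) x := by
  have h1x : 0 < 1 - x := by linarith
  have hpow (p : ℝ) := ((hasDerivAt_id' x).const_sub 1).rpow_const (p := p) (Or.inl h1x.ne')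
  refine ((((hasDerivAt_log_div_sub_sqrt hx0 hx1).const_mul (3/2)).sub
    ((hpow _).const_mul √2)).sub ((hpow _).const_mul (9 * √2 / 20))).congr_deriv ?_
  rw [show (3:ℝ)/2 - 1 = (1:ℕ)/2 by norm_num, show (5:ℝ)/2 - 1 = (3:ℕ)/2 by norm_num,
    rpow_natCast_div_two h1x.le, rpow_natCast_div_two h1x.le,
    show 1 - x^2 = (1 - x) * (1 + x) by ring, sqrt_mul h1x.le, zetaRemainderDeriv]
  have ht : √(1 - x) ^ 2 = 1 - x := sq_sqrt h1x.le
  field_simp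
  linear_combination (180 * x * √2) * ht

lemma abs_sqrt_one_add_sub_le {x : ℝ} (hx0 : 0 ≤ x) (hx1 : x ≤ 1) :
    |√(1 + x) - √2 * x * (7 - 3 * x) / 4| ≤ 23/8 * (1 - x)^2 := by
  set w := √(1 + x)
  set B := √2 * x * (7 - 3 * x) / 4
  have hw : 1 ≤ w := one_le_sqrt.2 (by linarith)
  have hB : 0 ≤ B := by
    have : 0 ≤ 7 - 3 * x := by linarith
    positivity
  have hprod : (w - B) * (w + B) = (1 - x)^2 * (8 + 24 * x - 9 * x^2) / 8 := by
    have hw2 : w^2 = 1 + x := sq_sqrt (by linarith)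
    have h2 : √2^2 = 2 := sq_sqrt (by norm_num)
    linear_combination hw2 - x^2 * (7 - 3 * x)^2 / 16 * h2
  calc |w - B| ≤ |w - B| * (w + B) := le_mul_of_one_le_right (abs_nonneg _) (by linarith)
    _ = (1 - x)^2 * (8 + 24 * x - 9 * x^2) / 8 := by
      rw [← abs_of_pos (by linarith : 0 < w + B), ← abs_mul, hprod, abs_of_nonneg]
      have : 0 ≤ 8 + 24 * x - 9 * x^2 := by nlinarith
      positivity
    _ ≤ 23/8 * (1 - x)^2 := by nlinarith [sq_nonneg (1 - x)]

lemma norm_zetaRemainderDeriv_le {x : ℝ} (hx : 1/2 ≤ x) (hx1 : x ≤ 1) :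
    ‖zetaRemainderDeriv x‖ ≤ 9 * (1 - x) ^ ((5:ℝ)/2) := by
  have h1x : 0 ≤ 1 - x := by linarith
  have hE := abs_sqrt_one_add_sub_le (by linarith) hx1
  rw [show (5:ℝ)/2 = (5:ℕ)/2 by norm_num, rpow_natCast_div_two h1x, zetaRemainderDeriv,
    norm_eq_abs, abs_div, abs_mul, abs_mul, abs_of_pos (by linarith : 0 < x),
    abs_of_nonneg (sqrt_nonneg _), div_le_iff₀ (by linarith)]
  set t := √(1 - x)
  have ht : 0 ≤ t := sqrt_nonneg _
  have ht4 : (1 - x)^2 = t^4 := by rw [← sq_sqrt h1x]; ring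
  rw [ht4] at hE
  norm_num
  nlinarith [mul_le_mul_of_nonneg_left hE ht, mul_nonneg (pow_nonneg ht 5) (sub_nonneg.2 hx)]

lemma continuousAt_zetaRemainder {x : ℝ} (hx : 0 < x) : ContinuousAt zetaRemainder x := by
  have harg : 0 < (1 + √(1 - x^2)) / x := by positivity
  unfold zetaRemainder
  fun_prop (disch := first | positivity | norm_num)

lemma zetaRemainder_one : zetaRemainder 1 = 0 := by
  norm_num [zetaRemainder]

lemma norm_zetaRemainder_le {z : ℝ} (hz : 1/2 ≤ z) (hz1 : z ≤ 1) :
    ‖zetaRemainder z‖ ≤ 9 * (1 - z) ^ ((7:ℝ)/2) := by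
  have hC : ∀ x ∈ Ico z 1, ‖zetaRemainderDeriv x‖ ≤ 9 * (1 - z) ^ ((5:ℝ)/2) := fun x hx =>
    (norm_zetaRemainderDeriv_le (hz.trans hx.1) hx.2.le).trans
      (by gcongr <;> linarith [hx.1, hx.2])
  have hmvt := norm_image_sub_le_of_norm_deriv_right_le_segment
    (fun x hx => (continuousAt_zetaRemainder (by linarith [hx.1])).continuousWithinAt)
    (fun x hx => (hasDerivAt_zetaRemainder (by linarith [hx.1]) hx.2).hasDerivWithinAt) hC
    1 (right_mem_Icc.2 hz1)
  rw [zetaRemainder_one, zero_sub, norm_neg] at hmvt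
  calc ‖zetaRemainder z‖ ≤ 9 * (1 - z) ^ ((5:ℝ)/2) * (1 - z) := hmvt
    _ = 9 * (1 - z) ^ ((7:ℝ)/2) := by
      rw [mul_assoc, ← rpow_add_one' (by linarith) (by norm_num)]
      norm_num

theorem zeta_expansion_left (ζ : ℝ → ℝ)
    (hζ : ∀ z : ℝ, 0 < z → z ≤ 1 → 0 ≤ ζ z ∧
      (2/3) * (ζ z) ^ ((3:ℝ)/2) =
        Real.log ((1 + Real.sqrt (1 - z^2)) / z) - Real.sqrt (1 - z^2)) :
    (fun z : ℝ => (ζ z) ^ ((3:ℝ)/2) -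
        (Real.sqrt 2 * (1 - z) ^ ((3:ℝ)/2) +
          (9 * Real.sqrt 2 / 20) * (1 - z) ^ ((5:ℝ)/2)))
      =O[nhdsWithin 1 (Set.Iio 1)] (fun z : ℝ => (1 - z) ^ ((7:ℝ)/2)) := by
  refine isBigO_iff.2 ⟨9, ?_⟩
  filter_upwards [Ioo_mem_nhdsLT (show (1/2 : ℝ) < 1 by norm_num)] with z ⟨hz, hz1⟩
  have hζz : ζ z ^ ((3:ℝ)/2) - (√2 * (1 - z) ^ ((3:ℝ)/2) + (9 * √2 / 20) * (1 - z) ^ ((5:ℝ)/2))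
      = zetaRemainder z := by
    rw [zetaRemainder]
    linarith [(hζ z (by linarith) hz1.le).2]
  rw [hζz, norm_of_nonneg (rpow_nonneg (by linarith) _)]
  exact norm_zetaRemainder_le hz.le hz1.le
end
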